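/- For x in the interior of L^n, the quadratic representation Q_x = 2Arw²(x) − Arw(Arw(x)x) maps the Lorentz cone L^n bijectively onto itself. -/
import Mathlib


/-- The arrowhead matrix `Arw(x) = [[x₀, x̄ᵀ],[x̄, x₀ Iₙ]]` of `x = (x₀; x̄) ∈ ℝ^(n+1)`. -/
def Arw {n : ℕ} (x0 : ℝ) (x : EuclideanSpace ℝ (Fin n)) :
    Matrix (Fin 1 ⊕ Fin n) (Fin 1 ⊕ Fin n) ℝ :=
  Matrix.fromBlocks (Matrix.of fun _ _ => x0) (Matrix.of fun _ j => x j)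
    (Matrix.of fun i _ => x i) (x0 • (1 : Matrix (Fin n) (Fin n) ℝ))

/-- The quadratic representation `Q_x = 2 Arw²(x) - Arw(Arw(x) x)`, where
`Arw(x) x = (x₀² + ‖x̄‖²; 2 x₀ x̄)`. -/
noncomputable def quadRep {n : ℕ} (x0 : ℝ) (x : EuclideanSpace ℝ (Fin n)) :
    Matrix (Fin 1 ⊕ Fin n) (Fin 1 ⊕ Fin n) ℝ :=
  (2 : ℝ) • (Arw x0 x * Arw x0 x) - Arw (x0 ^ 2 + ‖x‖ ^ 2) ((2 * x0) • x)

/-- The Lorentz cone `L^n`, as a set of vectors indexed by `Fin 1 ⊕ Fin n`. -/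
def lorentzConeVec (n : ℕ) : Set (Fin 1 ⊕ Fin n → ℝ) :=
  {v | Real.sqrt (∑ j : Fin n, v (Sum.inr j) ^ 2) ≤ v (Sum.inl 0)}

lemma norm_sq_eq {n} (x : EuclideanSpace ℝ (Fin n)) : ‖x‖^2 = ∑ i, x i ^ 2 := by
  rw [EuclideanSpace.norm_eq, Real.sq_sqrt (by positivity)]
  simp [Real.norm_eq_abs, sq_abs]

lemma qr11 {n} (x0 : ℝ) (x : EuclideanSpace ℝ (Fin n)) (i j : Fin 1) :
    quadRep x0 x (Sum.inl i) (Sum.inl j) = x0^2 + ∑ k, x k ^ 2 := by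
  simp [quadRep, Arw, Matrix.mul_apply, Fintype.sum_sum_type, norm_sq_eq, Matrix.one_apply]
  ring

lemma qr12 {n} (x0 : ℝ) (x : EuclideanSpace ℝ (Fin n)) (i : Fin 1) (j : Fin n) :
    quadRep x0 x (Sum.inl i) (Sum.inr j) = 2 * x0 * x j := by
  simp [quadRep, Arw, Matrix.mul_apply, Fintype.sum_sum_type, Matrix.one_apply,
    Finset.mul_sum, Finset.sum_ite_eq, mul_ite]
  ring

lemma qr21 {n} (x0 : ℝ) (x : EuclideanSpace ℝ (Fin n)) (i : Fin n) (j : Fin 1) :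
    quadRep x0 x (Sum.inr i) (Sum.inl j) = 2 * x0 * x i := by
  simp [quadRep, Arw, Matrix.mul_apply, Fintype.sum_sum_type, Matrix.one_apply,
    Finset.mul_sum, Finset.sum_ite_eq, mul_ite]
  ring

lemma qr22 {n} (x0 : ℝ) (x : EuclideanSpace ℝ (Fin n)) (i j : Fin n) :
    quadRep x0 x (Sum.inr i) (Sum.inr j)
      = 2 * x i * x j + (x0^2 - ∑ k, x k ^ 2) * (if i = j then 1 else 0) := by
  simp [quadRep, Arw, Matrix.mul_apply, Fintype.sum_sum_type, Matrix.one_apply, norm_sq_eq,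
    Finset.mul_sum, Finset.sum_ite_eq, mul_ite]
  split <;> ring

lemma mulVec_inl {n} (x0 : ℝ) (x : EuclideanSpace ℝ (Fin n)) (v : Fin 1 ⊕ Fin n → ℝ) (i : Fin 1) :
    (quadRep x0 x).mulVec v (Sum.inl i)
      = (x0^2 + ∑ k, x k ^ 2) * v (Sum.inl 0) + 2 * x0 * ∑ j, x j * v (Sum.inr j) := by
  rw [Matrix.mulVec, dotProduct, Fintype.sum_sum_type]
  simp only [qr11, qr12, Fin.sum_univ_one, Finset.mul_sum]
  congr 1
  exact Finset.sum_congr rfl fun k _ => by ring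

lemma mulVec_inr {n} (x0 : ℝ) (x : EuclideanSpace ℝ (Fin n)) (v : Fin 1 ⊕ Fin n → ℝ) (i : Fin n) :
    (quadRep x0 x).mulVec v (Sum.inr i)
      = 2 * x0 * v (Sum.inl 0) * x i + 2 * (∑ j, x j * v (Sum.inr j)) * x i
        + (x0^2 - ∑ k, x k ^ 2) * v (Sum.inr i) := by
  rw [Matrix.mulVec, dotProduct, Fintype.sum_sum_type]
  simp only [qr21, qr22, Fin.sum_univ_one]
  have h : ∀ k, (2 * x i * x k + (x0^2 - ∑ m, x m ^ 2) * (if i = k then 1 else 0)) * v (Sum.inr k)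
      = 2 * (x k * v (Sum.inr k)) * x i
        + (if i = k then (x0^2 - ∑ m, x m ^ 2) * v (Sum.inr k) else 0) := by
    intro k; split <;> ring
  rw [Finset.sum_congr rfl fun k _ => h k, Finset.sum_add_distrib, Finset.sum_ite_eq,
    ← Finset.sum_mul, ← Finset.mul_sum]
  simp
  ring

lemma mem_lorentz_iff {n} (v : Fin 1 ⊕ Fin n → ℝ) :
    v ∈ lorentzConeVec n ↔
      0 ≤ v (Sum.inl 0) ∧ ∑ j, v (Sum.inr j) ^ 2 ≤ v (Sum.inl 0) ^ 2 := by
  have hS : 0 ≤ ∑ j, v (Sum.inr j) ^ 2 := Finset.sum_nonneg fun _ _ => sq_nonneg _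
  constructor
  · intro h
    have h0 : 0 ≤ v (Sum.inl 0) := le_trans (Real.sqrt_nonneg _) h
    refine ⟨h0, ?_⟩
    have := pow_le_pow_left₀ (Real.sqrt_nonneg _) h 2
    rwa [Real.sq_sqrt hS] at this
  · rintro ⟨h0, h1⟩
    calc Real.sqrt (∑ j, v (Sum.inr j) ^ 2) ≤ Real.sqrt (v (Sum.inl 0) ^ 2) :=
          Real.sqrt_le_sqrt h1
      _ = v (Sum.inl 0) := Real.sqrt_sq h0

lemma mapsTo_lemma {n} (x0 : ℝ) (x : EuclideanSpace ℝ (Fin n)) (hx : ‖x‖ < x0)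
    {v} (hv : v ∈ lorentzConeVec n) : (quadRep x0 x).mulVec v ∈ lorentzConeVec n := by
  rw [mem_lorentz_iff] at hv ⊢
  obtain ⟨h0, h1⟩ := hv
  set t := v (Sum.inl 0) with ht
  set s := ∑ j, x j * v (Sum.inr j) with hs
  set X := ∑ k, x k ^ 2 with hXdef
  set S := ∑ j, v (Sum.inr j) ^ 2 with hSdef
  have hx0 : 0 < x0 := lt_of_le_of_lt (norm_nonneg x) hx
  have hX : X < x0 ^ 2 := by
    have h2 := norm_sq_eq x
    nlinarith [norm_nonneg x]
  have hXn : 0 ≤ X := Finset.sum_nonneg fun _ _ => sq_nonneg _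
  have hSn : 0 ≤ S := Finset.sum_nonneg fun _ _ => sq_nonneg _
  have hcs : s ^ 2 ≤ X * S := by
    exact Finset.sum_mul_sq_le_sq_mul_sq Finset.univ (fun j => x j) (fun j => v (Sum.inr j))
  have hst : s ^ 2 ≤ X * t ^ 2 := by
    nlinarith [hcs, mul_le_mul_of_nonneg_left h1 hXn]
  have htop : 0 ≤ (x0^2 + X) * t + 2 * x0 * s := by
    nlinarith [mul_nonneg (by positivity : (0:ℝ) ≤ x0^2 + X) h0, hst,
      mul_nonneg (sq_nonneg (x0^2 - X)) (sq_nonneg t), hx0]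
  have hsum : ∑ j, ((quadRep x0 x).mulVec v (Sum.inr j)) ^ 2
      = (2*x0*t + 2*s)^2 * X + 2*(2*x0*t+2*s)*(x0^2-X)*s + (x0^2-X)^2 * S := by
    have expand : ∀ j : Fin n, ((quadRep x0 x).mulVec v (Sum.inr j)) ^ 2
        = (2*x0*t+2*s)^2 * x j ^ 2 + 2*(2*x0*t+2*s)*(x0^2-X)*(x j * v (Sum.inr j))
          + (x0^2-X)^2 * v (Sum.inr j) ^ 2 := by
      intro j
      rw [mulVec_inr]
      ring
    rw [Finset.sum_congr rfl fun j _ => expand j]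
    rw [Finset.sum_add_distrib, Finset.sum_add_distrib, ← Finset.mul_sum, ← Finset.mul_sum,
      ← Finset.mul_sum]
  constructor
  · rw [mulVec_inl]
    exact htop
  · rw [mulVec_inl]
    have key : ((x0^2 + X) * t + 2 * x0 * s) ^ 2
        - ((2*x0*t + 2*s)^2 * X + 2*(2*x0*t+2*s)*(x0^2-X)*s + (x0^2-X)^2 * S)
        = (x0^2 - X)^2 * (t^2 - S) := by ring
    rw [hsum]
    nlinarith [sq_nonneg (x0^2 - X), key, mul_nonneg (sq_nonneg (x0^2 - X)) (sub_nonneg.2 h1)]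

lemma quadRep_mul_inv {n} (x0 : ℝ) (x : EuclideanSpace ℝ (Fin n)) (hx : ‖x‖ < x0) :
    quadRep x0 x * quadRep (x0 / (x0^2 - ‖x‖^2)) ((-(x0^2 - ‖x‖^2)⁻¹) • x) = 1 := by
  have hx0 : 0 < x0 := lt_of_le_of_lt (norm_nonneg x) hx
  obtain ⟨b, hbdef⟩ : ∃ b : ℝ, b = x0^2 - ‖x‖^2 := ⟨_, rfl⟩
  rw [← hbdef]
  have hb : 0 < b := by rw [hbdef]; nlinarith [norm_nonneg x]
  have hb' : b ≠ 0 := ne_of_gt hb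
  have hXsum : (∑ k, x k ^ 2) = x0^2 - b := by rw [← norm_sq_eq, hbdef]; ring
  have hy : ∀ k : Fin n, ((-b⁻¹ : ℝ) • x) k = -(b⁻¹) * x k := fun k => rfl
  have hYX : ∑ m, (-(b⁻¹) * x m) ^ 2 = b⁻¹^2 * (x0^2 - b) := by
    rw [← hXsum, Finset.mul_sum]
    exact Finset.sum_congr rfl fun k _ => by ring
  ext i j
  rw [Matrix.mul_apply, Fintype.sum_sum_type]
  cases i with
  | inl i =>
    cases j with
    | inl j =>
      simp only [qr11, qr12, qr21, hy, hYX, Fin.sum_univ_one]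
      have e2 : ∑ k, (2*x0*x k) * (2*(x0/b)*(-(b⁻¹)*x k))
          = (2*x0*(2*(x0/b)*(-(b⁻¹)))) * (x0^2 - b) := by
        have h : ∀ k : Fin n, (2*x0*x k) * (2*(x0/b)*(-(b⁻¹)*x k))
            = (2*x0*(2*(x0/b)*(-(b⁻¹)))) * x k ^ 2 := fun k => by ring
        rw [Finset.sum_congr rfl fun k _ => h k, ← Finset.mul_sum, hXsum]
      rw [e2, show (1 : Matrix (Fin 1 ⊕ Fin n) (Fin 1 ⊕ Fin n) ℝ) (Sum.inl i) (Sum.inl j) = 1 by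
        rw [Subsingleton.elim i j, Matrix.one_apply_eq], hXsum]
      field_simp
      ring
    | inr j =>
      simp only [qr11, qr12, qr21, qr22, hy, hYX, Fin.sum_univ_one]
      have e3 : ∑ k, (2*x0*x k) * (2*(-(b⁻¹)*x k)*(-(b⁻¹)*x j)
            + ((x0/b)^2 - b⁻¹^2*(x0^2 - b)) * (if k = j then 1 else 0))
          = (4*x0*b⁻¹*b⁻¹*x j) * (x0^2 - b)
            + 2*x0*x j*((x0/b)^2 - b⁻¹^2*(x0^2 - b)) := by
        have h : ∀ k : Fin n, (2*x0*x k) * (2*(-(b⁻¹)*x k)*(-(b⁻¹)*x j)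
              + ((x0/b)^2 - b⁻¹^2*(x0^2 - b)) * (if k = j then 1 else 0))
            = (4*x0*b⁻¹*b⁻¹*x j) * x k ^ 2
              + (if k = j then 2*x0*x k*((x0/b)^2 - b⁻¹^2*(x0^2 - b)) else 0) := by
          intro k; by_cases hk : k = j <;> simp [hk] <;> ring
        rw [Finset.sum_congr rfl fun k _ => h k, Finset.sum_add_distrib,
          Finset.sum_ite_eq', ← Finset.mul_sum, hXsum]
        simp
      rw [e3, show (1 : Matrix (Fin 1 ⊕ Fin n) (Fin 1 ⊕ Fin n) ℝ) (Sum.inl i) (Sum.inr j) = 0 by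
        simp [Matrix.one_apply], hXsum]
      field_simp
      ring
  | inr i =>
    cases j with
    | inl j =>
      simp only [qr11, qr12, qr21, qr22, hy, hYX, Fin.sum_univ_one]
      have e4 : ∑ k, (2*x i*x k + (x0^2 - ∑ m, x m ^ 2) * (if i = k then 1 else 0))
            * (2*(x0/b)*(-(b⁻¹)*x k))
          = (2*x i*(2*(x0/b)*(-(b⁻¹)))) * (x0^2 - b)
            + (x0^2 - ∑ m, x m ^ 2) * (2*(x0/b)*(-(b⁻¹)*x i)) := by
        have h : ∀ k : Fin n, (2*x i*x k + (x0^2 - ∑ m, x m ^ 2) * (if i = k then 1 else 0))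
              * (2*(x0/b)*(-(b⁻¹)*x k))
            = (2*x i*(2*(x0/b)*(-(b⁻¹)))) * x k ^ 2
              + (if i = k then (x0^2 - ∑ m, x m ^ 2) * (2*(x0/b)*(-(b⁻¹)*x k)) else 0) := by
          intro k; by_cases hk : i = k <;> simp [hk] <;> ring
        rw [Finset.sum_congr rfl fun k _ => h k, Finset.sum_add_distrib,
          Finset.sum_ite_eq, ← Finset.mul_sum, hXsum]
        simp
      rw [e4, show (1 : Matrix (Fin 1 ⊕ Fin n) (Fin 1 ⊕ Fin n) ℝ) (Sum.inr i) (Sum.inl j) = 0 by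
        simp [Matrix.one_apply], hXsum]
      field_simp
      ring
    | inr j =>
      simp only [qr11, qr12, qr21, qr22, hy, hYX, Fin.sum_univ_one]
      have e5 : ∑ k, (2*x i*x k + (x0^2 - ∑ m, x m ^ 2) * (if i = k then 1 else 0))
            * (2*(-(b⁻¹)*x k)*(-(b⁻¹)*x j)
              + ((x0/b)^2 - b⁻¹^2*(x0^2 - b)) * (if k = j then 1 else 0))
          = (4*b⁻¹*b⁻¹*x i*x j) * (x0^2 - b)
            + 2*x i*x j*((x0/b)^2 - b⁻¹^2*(x0^2 - b))
            + (x0^2 - ∑ m, x m ^ 2)*(2*b⁻¹*b⁻¹*x i*x j)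
            + (x0^2 - ∑ m, x m ^ 2)*((x0/b)^2 - b⁻¹^2*(x0^2 - b))
              * (if i = j then 1 else 0) := by
        have h : ∀ k : Fin n, (2*x i*x k + (x0^2 - ∑ m, x m ^ 2) * (if i = k then 1 else 0))
              * (2*(-(b⁻¹)*x k)*(-(b⁻¹)*x j)
                + ((x0/b)^2 - b⁻¹^2*(x0^2 - b)) * (if k = j then 1 else 0))
            = (4*b⁻¹*b⁻¹*x i*x j) * x k ^ 2
              + (if k = j then 2*x i*x k*((x0/b)^2 - b⁻¹^2*(x0^2 - b)) else 0)
              + (if i = k then (x0^2 - ∑ m, x m ^ 2)*(2*b⁻¹*b⁻¹*x k*x j) else 0)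
              + (if i = k then (x0^2 - ∑ m, x m ^ 2)*((x0/b)^2 - b⁻¹^2*(x0^2 - b))
                  * (if k = j then 1 else 0) else 0) := by
          intro k
          by_cases h1 : i = k
          · subst h1
            by_cases h2 : i = j
            · subst h2; simp; try ring
            · simp [h2]; try ring
          · by_cases h2 : k = j
            · subst h2; simp [h1]; try ring
            · simp [h1, h2]; try ring
        rw [Finset.sum_congr rfl fun k _ => h k, Finset.sum_add_distrib, Finset.sum_add_distrib,
          Finset.sum_add_distrib, Finset.sum_ite_eq', Finset.sum_ite_eq, Finset.sum_ite_eq,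
          ← Finset.mul_sum, hXsum]
        simp
      rw [e5, show (1 : Matrix (Fin 1 ⊕ Fin n) (Fin 1 ⊕ Fin n) ℝ) (Sum.inr i) (Sum.inr j)
          = if i = j then 1 else 0 by simp [Matrix.one_apply], hXsum]
      split_ifs
      · field_simp
        ring
      · field_simp
        ring

/-- For `x` in the interior of the Lorentz cone, the quadratic representation
`Q_x` maps the Lorentz cone bijectively onto itself. -/
theorem quadRep_bijOn_lorentzCone {n : ℕ} (x0 : ℝ) (x : EuclideanSpace ℝ (Fin n))
    (hx : ‖x‖ < x0) :
    Set.BijOn (fun v => (quadRep x0 x).mulVec v) (lorentzConeVec n)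
      (lorentzConeVec n) := by
  have hx0 : 0 < x0 := lt_of_le_of_lt (norm_nonneg x) hx
  have hb : 0 < x0^2 - ‖x‖^2 := by nlinarith [norm_nonneg x]
  set b := x0^2 - ‖x‖^2 with hbdef
  have hMN := quadRep_mul_inv x0 x hx
  rw [← hbdef] at hMN
  have hNM : quadRep (x0 / b) ((-b⁻¹) • x) * quadRep x0 x = 1 :=
    mul_eq_one_comm.mp hMN
  have hy : ‖(-b⁻¹ : ℝ) • x‖ < x0 / b := by
    rw [norm_smul, Real.norm_eq_abs, abs_neg, abs_inv, abs_of_pos hb, inv_mul_eq_div,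
      div_lt_div_iff_of_pos_right hb]
    exact hx
  refine ⟨fun v hv => mapsTo_lemma x0 x hx hv, ?_, ?_⟩
  · intro v _ w _ h
    have h2 := congrArg (fun u => (quadRep (x0 / b) ((-b⁻¹) • x)).mulVec u) h
    simp only [Matrix.mulVec_mulVec] at h2
    rwa [hNM, Matrix.one_mulVec, Matrix.one_mulVec] at h2
  · intro w hw
    refine ⟨(quadRep (x0 / b) ((-b⁻¹) • x)).mulVec w, mapsTo_lemma _ _ hy hw, ?_⟩
    show (quadRep x0 x).mulVec ((quadRep (x0 / b) ((-b⁻¹) • x)).mulVec w) = w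
    rw [Matrix.mulVec_mulVec, hMN, Matrix.one_mulVec]
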